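/- Kronecker products of independent absolutely continuous vectors are (k+l−1)-analytic: Let a ∈ ℝ^k and b ∈ ℝ^l be independent random vectors such that the product measure μ_a × μ_b is absolutely continuous with respect to Lebesgue measure on ℝ^{k+l}. Then the random vector x = a ⊗ b ∈ ℝ^{kl} is (k+l−1)-analytic. -/

import Mathlib

open MeasureTheory Filter Set Metric Bornology Matrix Pointwise
noncomputable def diffMatrix (s m : ℕ) (h : EuclideanSpace ℝ (Fin s) → EuclideanSpace ℝ (Fin m))
    (v : EuclideanSpace ℝ (Fin s)) : Matrix (Fin m) (Fin s) ℝ :=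
  Matrix.of fun i j => fderiv ℝ h v (EuclideanSpace.single j 1) i

noncomputable def jacobian (s m : ℕ) (h : EuclideanSpace ℝ (Fin s) → EuclideanSpace ℝ (Fin m))
    (v : EuclideanSpace ℝ (Fin s)) : ℝ :=
  if m < s then Real.sqrt ((diffMatrix s m h v * (diffMatrix s m h v)ᵀ).det)
  else Real.sqrt (((diffMatrix s m h v)ᵀ * diffMatrix s m h v).det)

def IsAnalyticMeasure (s m : ℕ) (μ : Measure (EuclideanSpace ℝ (Fin m))) : Prop :=
  ∀ U : Set (EuclideanSpace ℝ (Fin m)), 0 < μ U →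
    ∃ (h : EuclideanSpace ℝ (Fin s) → EuclideanSpace ℝ (Fin m)) (A : Set (EuclideanSpace ℝ (Fin s))),
      AnalyticOnNhd ℝ h Set.univ ∧ (∃ v, jacobian s m h v ≠ 0) ∧ 0 < volume A ∧ h '' A ⊆ U
noncomputable def kron {k l : ℕ} (u : EuclideanSpace ℝ (Fin k)) (v : EuclideanSpace ℝ (Fin l)) :
    EuclideanSpace ℝ (Fin (k * l)) :=
  (EuclideanSpace.equiv (Fin (k * l)) ℝ).symm
    (fun p => u (finProdFinEquiv.symm p).1 * v (finProdFinEquiv.symm p).2)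


/-! Off the null set `{a i₀ * b j₀ = 0}`, `a ⊗ b = h (φ (a, b))`, where the chart
`h (u, w') = u ⊗ (1, w')` of the rank-one matrices is analytic, injective with injective
differential on `{u i₀ ≠ 0}`, and `φ (a, b) = (b j₀ • a, b' / b j₀)` admits the differentiable
section `(v, t) ↦ (t⁻¹ • u, t • (1, w'))`; so the law `ρ` of `φ (a, b)` is absolutely continuous
and the law of `a ⊗ b` is `h_* ρ`. As `h` is injective on a set carrying `ρ`, Lusin–Souslin gives
`h_* ρ U = ρ (h ⁻¹' U)` for every, possibly non-measurable, `U`; hence `A = h ⁻¹' U` has positive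
Lebesgue measure whenever `U` has positive probability. -/

open scoped ENNReal Topology

section Measure

variable {X Y : Type*} [TopologicalSpace X] [PolishSpace X] [MeasurableSpace X] [BorelSpace X]
  [TopologicalSpace Y] [T2Space Y] [MeasurableSpace Y] [BorelSpace Y]

/-- By Lusin–Souslin, `f '' (N ∩ Z) ∪ (f '' Z)ᶜ` is a measurable hull of `s` whenever `N` is a
measurable hull of `f ⁻¹' s`. -/
theorem MeasureTheory.Measure.map_apply_of_injOn {μ : Measure X} {f : X → Y} {Z : Set X}
    (hf : Continuous f) (hZ : MeasurableSet Z) (hfZ : InjOn f Z) (hμZ : ∀ᵐ x ∂μ, x ∈ Z)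
    (s : Set Y) :
    μ.map f s = μ (f ⁻¹' s) := by
  refine le_antisymm ?_ (le_map_apply hf.measurable.aemeasurable s)
  set N := toMeasurable μ (f ⁻¹' s)
  have hN : MeasurableSet (N ∩ Z) := (measurableSet_toMeasurable _ _).inter hZ
  have hW : MeasurableSet (f '' (N ∩ Z) ∪ (f '' Z)ᶜ) :=
    (hN.image_of_continuousOn_injOn hf.continuousOn (hfZ.mono inter_subset_right)).union
      (hZ.image_of_continuousOn_injOn hf.continuousOn hfZ).compl
  have hsW : s ⊆ f '' (N ∩ Z) ∪ (f '' Z)ᶜ := by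
    rintro y hy
    by_cases hyZ : y ∈ f '' Z
    · obtain ⟨x, hxZ, rfl⟩ := hyZ
      exact Or.inl ⟨x, ⟨subset_toMeasurable _ _ hy, hxZ⟩, rfl⟩
    · exact Or.inr hyZ
  have hWN : f ⁻¹' (f '' (N ∩ Z) ∪ (f '' Z)ᶜ) ⊆ N ∪ Zᶜ := by
    rintro x (⟨z, ⟨hzN, hzZ⟩, hzx⟩ | hx)
    · by_cases hxZ : x ∈ Z
      · exact Or.inl (hfZ hzZ hxZ hzx ▸ hzN)
      · exact Or.inr hxZ
    · exact Or.inr fun hxZ => hx ⟨x, hxZ, rfl⟩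
  calc μ.map f s ≤ μ.map f (f '' (N ∩ Z) ∪ (f '' Z)ᶜ) := measure_mono hsW
    _ = μ (f ⁻¹' (f '' (N ∩ Z) ∪ (f '' Z)ᶜ)) := map_apply hf.measurable hW
    _ ≤ μ N + μ Zᶜ := (measure_mono hWN).trans (measure_union_le _ _)
    _ = μ (f ⁻¹' s) := by rw [show μ Zᶜ = 0 from ae_iff.1 hμZ, add_zero, measure_toMeasurable]

end Measure

section Haar

variable {E F : Type*} [NormedAddCommGroup E] [NormedSpace ℝ E] [FiniteDimensional ℝ E]
  [MeasurableSpace E] [BorelSpace E] [NormedAddCommGroup F] [NormedSpace ℝ F]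
  [FiniteDimensional ℝ F] [MeasurableSpace F] [BorelSpace F]

theorem MeasureTheory.addHaar_image_eq_zero_of_differentiableOn_of_finrank_eq
    (μ : Measure E) [μ.IsAddHaarMeasure] (ν : Measure F) [ν.IsAddHaarMeasure]
    (hEF : Module.finrank ℝ E = Module.finrank ℝ F) {f : E → F} {s : Set E}
    (hf : DifferentiableOn ℝ f s) (hs : μ s = 0) : ν (f '' s) = 0 := by
  let L : F ≃L[ℝ] E := ContinuousLinearEquiv.ofFinrankEq hEF.symm
  have hLf : μ ((L ∘ f) '' s) = 0 :=
    addHaar_image_eq_zero_of_differentiableOn_of_addHaar_eq_zero μ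
      (L.differentiable.comp_differentiableOn hf) hs
  have hνL : ν.map L ≪ μ := Measure.absolutelyContinuous_isAddHaarMeasure _ _
  have hL : ν (f '' s) = ν.map L (L '' (f '' s)) := by
    rw [← L.coe_toHomeomorph, ← L.toHomeomorph.toMeasurableEquiv_coe, MeasurableEquiv.map_apply,
      preimage_image_eq _ L.toHomeomorph.toMeasurableEquiv.injective]
  rw [hL]
  exact hνL (by rwa [← image_comp])

/-- On `S`, `φ`-preimages of null sets are covered by `G`-images of null sets, and `G` maps null
sets to null sets since its source and target have the same dimension. -/
theorem MeasureTheory.Measure.AbsolutelyContinuous.map_restrict_of_section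
    {μ : Measure E} [μ.IsAddHaarMeasure] {ν : Measure F} [ν.IsAddHaarMeasure]
    (hEF : Module.finrank ℝ E = Module.finrank ℝ F + 1) {ρ : Measure E} (hρ : ρ ≪ μ)
    {φ : E → F} (hφ : Measurable φ) {S : Set E} {G : F × ℝ → E}
    (hG : DifferentiableOn ℝ G (univ ×ˢ {0}ᶜ)) (hGφ : ∀ p ∈ S, ∃ t ≠ 0, G (φ p, t) = p) :
    (ρ.restrict S).map φ ≪ ν := by
  refine Measure.AbsolutelyContinuous.mk fun s hs hνs => ?_
  rw [Measure.map_apply hφ hs, Measure.restrict_apply (hφ hs)]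
  refine hρ (measure_mono_null (t := G '' (s ×ˢ {0}ᶜ)) ?_ ?_)
  · rintro p ⟨hps, hpS⟩
    obtain ⟨t, ht, hGp⟩ := hGφ p hpS
    exact ⟨(φ p, t), ⟨hps, ht⟩, hGp⟩
  · refine addHaar_image_eq_zero_of_differentiableOn_of_finrank_eq (ν.prod volume) μ
      (by simp [hEF]) (hG.mono (Set.prod_mono (subset_univ _) le_rfl)) ?_
    rw [Measure.prod_prod, hνs, zero_mul]

theorem MeasureTheory.ae_apply_ne_zero_of_ne_zero (μ : Measure E) [μ.IsAddHaarMeasure]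
    {f : E →ₗ[ℝ] ℝ} (hf : f ≠ 0) : ∀ᵐ x ∂μ, f x ≠ 0 :=
  ae_iff.2 <| by
    simp only [ne_eq, not_not]
    exact Measure.addHaar_submodule μ _ (mt LinearMap.ker_eq_top.1 hf)

end Haar

section Jacobian

variable {s m : ℕ} {h : EuclideanSpace ℝ (Fin s) → EuclideanSpace ℝ (Fin m)}
  {v : EuclideanSpace ℝ (Fin s)}

theorem diffMatrix_eq_toMatrix :
    diffMatrix s m h v = LinearMap.toMatrix (EuclideanSpace.basisFun (Fin s) ℝ).toBasis
      (EuclideanSpace.basisFun (Fin m) ℝ).toBasis (fderiv ℝ h v) := by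
  ext i j
  simp [diffMatrix, LinearMap.toMatrix_apply]

theorem diffMatrix_mulVec (x : Fin s → ℝ) :
    diffMatrix s m h v *ᵥ x = WithLp.ofLp (fderiv ℝ h v (WithLp.toLp 2 x)) := by
  have := LinearMap.toMatrix_mulVec_repr (EuclideanSpace.basisFun (Fin s) ℝ).toBasis
      (EuclideanSpace.basisFun (Fin m) ℝ).toBasis (fderiv ℝ h v : _ →ₗ[ℝ] _) (WithLp.toLp 2 x)
  have hrepr : ∀ {n : ℕ} (y : EuclideanSpace ℝ (Fin n)),
      ⇑((EuclideanSpace.basisFun (Fin n) ℝ).toBasis.repr y) = WithLp.ofLp y := fun y => by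
    ext i; simp
  rwa [← diffMatrix_eq_toMatrix, hrepr, hrepr] at this

theorem jacobian_ne_zero_of_injective (hf : Function.Injective (fderiv ℝ h v)) :
    jacobian s m h v ≠ 0 := by
  have hsm : s ≤ m := by
    simpa using LinearMap.finrank_le_finrank_of_injective
      (f := (fderiv ℝ h v : EuclideanSpace ℝ (Fin s) →ₗ[ℝ] EuclideanSpace ℝ (Fin m))) hf
  have hD : Function.Injective (diffMatrix s m h v).mulVec := fun x y hxy => by
    simp only [diffMatrix_mulVec] at hxy
    exact WithLp.toLp_injective 2 (hf (WithLp.ofLp_injective 2 hxy))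
  rw [jacobian, if_neg (not_lt.2 hsm), Real.sqrt_ne_zero']
  simpa using (Matrix.PosDef.conjTranspose_mul_self _ hD).det_pos

end Jacobian

section Calculus

variable {𝕜 E F : Type*} [NontriviallyNormedField 𝕜] [NormedAddCommGroup E] [NormedSpace 𝕜 E]
  [NormedAddCommGroup F] [NormedSpace 𝕜 F]

theorem AnalyticAt.piLp {ι : Type*} [Fintype ι] {p : ℝ≥0∞} [Fact (1 ≤ p)] {G : ι → Type*}
    [∀ i, NormedAddCommGroup (G i)] [∀ i, NormedSpace 𝕜 (G i)] {f : E → PiLp p G} {x : E}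
    (hf : ∀ i, AnalyticAt 𝕜 (fun y => f y i) x) : AnalyticAt 𝕜 f x :=
  ((PiLp.continuousLinearEquiv p 𝕜 G).symm.analyticAt _).comp (AnalyticAt.pi hf)

theorem injective_fderiv_of_leftInverse {f : E → F} {g : F → E} {x : E}
    (hf : DifferentiableAt 𝕜 f x) (hg : DifferentiableAt 𝕜 g (f x)) (hgf : g ∘ f =ᶠ[𝓝 x] id) :
    Function.Injective (fderiv 𝕜 f x) := by
  have hcomp := (hg.hasFDerivAt.comp x hf.hasFDerivAt).unique
    ((hasFDerivAt_id x).congr_of_eventuallyEq hgf)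
  exact Function.LeftInverse.injective (g := fderiv 𝕜 g (f x)) fun y =>
    congrArg (· y) hcomp

end Calculus

section IsAnalyticMeasure

variable {s m : ℕ}

theorem isAnalyticMeasure_of_eq_zero (hm : m = 0) (μ : Measure (EuclideanSpace ℝ (Fin m))) :
    IsAnalyticMeasure s m μ := by
  subst hm
  intro U hU
  obtain ⟨y, hy⟩ := nonempty_of_measure_ne_zero hU.ne'
  refine ⟨fun _ => y, univ, analyticOnNhd_const, ⟨0, ?_⟩, isOpen_univ.measure_pos _ univ_nonempty,
    image_subset_iff.2 fun _ _ => hy⟩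
  rw [jacobian]
  split_ifs with hs
  · simp
  · obtain rfl : s = 0 := by omega
    simp

theorem isAnalyticMeasure_map {h : EuclideanSpace ℝ (Fin s) → EuclideanSpace ℝ (Fin m)}
    {ρ : Measure (EuclideanSpace ℝ (Fin s))} {Z : Set (EuclideanSpace ℝ (Fin s))}
    (hh : AnalyticOnNhd ℝ h univ) (hjac : ∃ v, jacobian s m h v ≠ 0) (hZ : MeasurableSet Z)
    (hhZ : InjOn h Z) (hρZ : ∀ᵐ v ∂ρ, v ∈ Z) (hρ : ρ ≪ volume) :
    IsAnalyticMeasure s m (ρ.map h) := by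
  intro U hU
  refine ⟨h, h ⁻¹' U, hh, hjac, pos_of_ne_zero fun hU0 => ?_, image_preimage_subset _ _⟩
  rw [Measure.map_apply_of_injOn (hh.continuous) hZ hhZ hρZ] at hU
  exact hU.ne' (hρ hU0)

end IsAnalyticMeasure

section Segre

variable {k l : ℕ}

theorem kron_apply (u : EuclideanSpace ℝ (Fin k)) (w : EuclideanSpace ℝ (Fin l)) (i : Fin k)
    (j : Fin l) : kron u w (finProdFinEquiv (i, j)) = u i * w j := by
  simp only [kron, EuclideanSpace.equiv, PiLp.continuousLinearEquiv_symm_apply,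
    Equiv.symm_apply_apply]

theorem kron_smul_smul {c : ℝ} (hc : c ≠ 0) (u : EuclideanSpace ℝ (Fin k))
    (w : EuclideanSpace ℝ (Fin l)) : kron (c • u) (c⁻¹ • w) = kron u w := by
  ext p
  simp only [kron, EuclideanSpace.equiv, PiLp.smul_apply, smul_eq_mul]
  field_simp

variable (i₀ : Fin k) (j₀ : Fin l)

/-- The parameters of the chart: the `k` entries of the first factor and the `l - 1` entries of the
second factor other than the one normalised to `1`. -/
noncomputable def segreParamEquiv : Fin (k + l - 1) ≃ Fin k ⊕ {j : Fin l // j ≠ j₀} :=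
  (Fintype.equivFinOfCardEq (by have := j₀.pos; simp [Fintype.card_subtype_compl]; omega)).symm

noncomputable def segreFst (v : EuclideanSpace ℝ (Fin (k + l - 1))) : EuclideanSpace ℝ (Fin k) :=
  WithLp.toLp 2 fun i => v ((segreParamEquiv j₀).symm (.inl i))

noncomputable def segreSnd (v : EuclideanSpace ℝ (Fin (k + l - 1))) : EuclideanSpace ℝ (Fin l) :=
  WithLp.toLp 2 fun j => if hj : j = j₀ then 1 else v ((segreParamEquiv j₀).symm (.inr ⟨j, hj⟩))

noncomputable def segreChart (v : EuclideanSpace ℝ (Fin (k + l - 1))) :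
    EuclideanSpace ℝ (Fin (k * l)) :=
  kron (segreFst j₀ v) (segreSnd j₀ v)

noncomputable def segreCoords (x : EuclideanSpace ℝ (Fin (k * l))) :
    EuclideanSpace ℝ (Fin (k + l - 1)) :=
  WithLp.toLp 2 fun a => Sum.elim (fun i => x (finProdFinEquiv (i, j₀)))
    (fun j => x (finProdFinEquiv (i₀, j.1)) / x (finProdFinEquiv (i₀, j₀))) (segreParamEquiv j₀ a)

def segreDomain : Set (EuclideanSpace ℝ (Fin (k + l - 1))) :=
  {v | v ((segreParamEquiv j₀).symm (.inl i₀)) ≠ 0}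

@[simp]
theorem mem_segreDomain {v : EuclideanSpace ℝ (Fin (k + l - 1))} :
    v ∈ segreDomain i₀ j₀ ↔ v ((segreParamEquiv j₀).symm (.inl i₀)) ≠ 0 :=
  Iff.rfl

noncomputable def segreLift (q : EuclideanSpace ℝ (Fin (k + l - 1)) × ℝ) :
    EuclideanSpace ℝ (Fin k) × EuclideanSpace ℝ (Fin l) :=
  (q.2⁻¹ • segreFst j₀ q.1, q.2 • segreSnd j₀ q.1)

theorem segreCoords_segreChart {v : EuclideanSpace ℝ (Fin (k + l - 1))}
    (hv : v ∈ segreDomain i₀ j₀) :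
    segreCoords i₀ j₀ (segreChart j₀ v) = v := by
  ext a
  rcases ha : segreParamEquiv j₀ a with i | ⟨j, hj⟩ <;> obtain rfl := (Equiv.eq_symm_apply _).2 ha
  · simp [segreCoords, segreChart, kron_apply, segreFst, segreSnd]
  · simp_all [segreCoords, segreChart, kron_apply, segreFst, segreSnd]

theorem segreCoords_apply_inl (x : EuclideanSpace ℝ (Fin (k * l))) (i : Fin k) :
    segreCoords i₀ j₀ x ((segreParamEquiv j₀).symm (.inl i)) = x (finProdFinEquiv (i, j₀)) := by
  simp [segreCoords]

theorem segreChart_apply_inl_self (v : EuclideanSpace ℝ (Fin (k + l - 1))) :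
    segreChart j₀ v (finProdFinEquiv (i₀, j₀)) = v ((segreParamEquiv j₀).symm (.inl i₀)) := by
  simp [segreChart, kron_apply, segreFst, segreSnd]

section Kron

variable {u : EuclideanSpace ℝ (Fin k)} {w : EuclideanSpace ℝ (Fin l)}

theorem segreFst_segreCoords_kron : segreFst j₀ (segreCoords i₀ j₀ (kron u w)) = w j₀ • u := by
  ext i
  simp [segreFst, segreCoords, kron_apply, mul_comm]

theorem segreSnd_segreCoords_kron (hu : u i₀ ≠ 0) (hw : w j₀ ≠ 0) :
    segreSnd j₀ (segreCoords i₀ j₀ (kron u w)) = (w j₀)⁻¹ • w := by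
  ext j
  by_cases hj : j = j₀
  · subst hj
    simp [segreSnd, hw]
  · simp only [segreSnd, segreCoords, hj, dite_false, WithLp.ofLp_toLp, Equiv.apply_symm_apply,
      Sum.elim_inr, kron_apply, PiLp.smul_apply, smul_eq_mul]
    field_simp

theorem segreChart_segreCoords_kron (hu : u i₀ ≠ 0) (hw : w j₀ ≠ 0) :
    segreChart j₀ (segreCoords i₀ j₀ (kron u w)) = kron u w := by
  rw [segreChart, segreFst_segreCoords_kron, segreSnd_segreCoords_kron i₀ j₀ hu hw,
    kron_smul_smul hw]

theorem segreLift_segreCoords_kron (hu : u i₀ ≠ 0) (hw : w j₀ ≠ 0) :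
    segreLift j₀ (segreCoords i₀ j₀ (kron u w), w j₀) = (u, w) := by
  simp [segreLift, segreFst_segreCoords_kron, segreSnd_segreCoords_kron i₀ j₀ hu hw, smul_smul, hw]

end Kron

end Segre

section SegreCalculus

variable {k l : ℕ} (i₀ : Fin k) (j₀ : Fin l)

theorem isOpen_segreDomain : IsOpen (segreDomain i₀ j₀) :=
  isOpen_ne_fun (EuclideanSpace.proj _).continuous continuous_const

theorem analyticAt_segreFst (v : EuclideanSpace ℝ (Fin (k + l - 1))) :
    AnalyticAt ℝ (segreFst j₀) v :=
  AnalyticAt.piLp fun i =>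
    (EuclideanSpace.proj (𝕜 := ℝ) ((segreParamEquiv j₀).symm (.inl i))).analyticAt v

theorem analyticAt_segreSnd (v : EuclideanSpace ℝ (Fin (k + l - 1))) :
    AnalyticAt ℝ (segreSnd j₀) v := by
  refine AnalyticAt.piLp fun j => ?_
  by_cases hj : j = j₀
  · simp only [segreSnd, hj, dite_true]
    exact analyticAt_const
  · simp only [segreSnd, hj, dite_false]
    exact (EuclideanSpace.proj (𝕜 := ℝ) ((segreParamEquiv j₀).symm (.inr ⟨j, hj⟩))).analyticAt v

theorem analyticOnNhd_segreChart : AnalyticOnNhd ℝ (segreChart (k := k) j₀) univ := fun v _ => by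
  refine AnalyticAt.piLp fun p => ?_
  obtain ⟨⟨i, j⟩, rfl⟩ := finProdFinEquiv.surjective p
  simp only [segreChart, kron_apply]
  exact (((EuclideanSpace.proj (𝕜 := ℝ) i).analyticAt _).comp (analyticAt_segreFst j₀ v)).mul
    (((EuclideanSpace.proj (𝕜 := ℝ) j).analyticAt _).comp (analyticAt_segreSnd j₀ v))

theorem analyticAt_segreCoords {x : EuclideanSpace ℝ (Fin (k * l))}
    (hx : x (finProdFinEquiv (i₀, j₀)) ≠ 0) : AnalyticAt ℝ (segreCoords i₀ j₀) x := by
  refine AnalyticAt.piLp fun a => ?_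
  have hproj (i : Fin k) (j : Fin l) : AnalyticAt ℝ (fun y : EuclideanSpace ℝ (Fin (k * l)) =>
      y (finProdFinEquiv (i, j))) x :=
    (EuclideanSpace.proj (𝕜 := ℝ) (finProdFinEquiv (i, j))).analyticAt x
  simp only [segreCoords, WithLp.ofLp_toLp]
  rcases segreParamEquiv j₀ a with i | ⟨j, -⟩
  · exact hproj i j₀
  · exact (hproj i₀ j).div (hproj i₀ j₀) hx

theorem measurable_segreCoords : Measurable (segreCoords i₀ j₀) := by
  refine (MeasurableEquiv.toLp 2 (Fin (k + l - 1) → ℝ)).measurable.comp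
    (measurable_pi_lambda _ fun a => ?_)
  rcases segreParamEquiv j₀ a with i | j <;> simp only [Sum.elim_inl, Sum.elim_inr] <;> fun_prop

theorem differentiableOn_segreLift : DifferentiableOn ℝ (segreLift (k := k) j₀) (univ ×ˢ {0}ᶜ) := by
  rintro q ⟨-, hq⟩
  refine (DifferentiableAt.prodMk ?_ ?_).differentiableWithinAt
  · exact (differentiableAt_snd.inv hq).smul
      ((analyticAt_segreFst j₀ q.1).differentiableAt.comp q differentiableAt_fst)
  · exact differentiableAt_snd.smul
      ((analyticAt_segreSnd j₀ q.1).differentiableAt.comp q differentiableAt_fst)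

theorem injOn_segreChart : InjOn (segreChart j₀) (segreDomain i₀ j₀) := fun v hv w hw h => by
  rw [← segreCoords_segreChart i₀ j₀ hv, h, segreCoords_segreChart i₀ j₀ hw]

theorem injective_fderiv_segreChart {v : EuclideanSpace ℝ (Fin (k + l - 1))}
    (hv : v ∈ segreDomain i₀ j₀) : Function.Injective (fderiv ℝ (segreChart j₀) v) := by
  refine injective_fderiv_of_leftInverse (analyticOnNhd_segreChart j₀ v trivial).differentiableAt
    (analyticAt_segreCoords i₀ j₀ ?_).differentiableAt ?_
  · rwa [segreChart_apply_inl_self]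
  · filter_upwards [(isOpen_segreDomain i₀ j₀).mem_nhds hv] with w hw
    exact segreCoords_segreChart i₀ j₀ hw

end SegreCalculus

section SegreMeasure

variable {k l : ℕ} (i₀ : Fin k) (j₀ : Fin l)

theorem measurable_kron :
    Measurable fun p : EuclideanSpace ℝ (Fin k) × EuclideanSpace ℝ (Fin l) => kron p.1 p.2 := by
  unfold kron
  fun_prop

theorem ae_fst_ne_zero_and_snd_ne_zero :
    ∀ᵐ p : EuclideanSpace ℝ (Fin k) × EuclideanSpace ℝ (Fin l), p.1 i₀ ≠ 0 ∧ p.2 j₀ ≠ 0 := by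
  rw [Measure.volume_eq_prod]
  have h₁ := ae_apply_ne_zero_of_ne_zero (volume.prod volume)
    (f := (EuclideanSpace.proj i₀ : _ →L[ℝ] ℝ).toLinearMap ∘ₗ .fst ℝ _ (EuclideanSpace ℝ (Fin l)))
    fun h => by simpa using LinearMap.congr_fun h (EuclideanSpace.single i₀ 1, 0)
  have h₂ := ae_apply_ne_zero_of_ne_zero (volume.prod volume)
    (f := (EuclideanSpace.proj j₀ : _ →L[ℝ] ℝ).toLinearMap ∘ₗ .snd ℝ (EuclideanSpace ℝ (Fin k)) _)
    fun h => by simpa using LinearMap.congr_fun h (0, EuclideanSpace.single j₀ 1)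
  exact h₁.and h₂

variable {ν : Measure (EuclideanSpace ℝ (Fin k) × EuclideanSpace ℝ (Fin l))}

theorem map_kron_eq_map_segreChart (hν : ∀ᵐ p ∂ν, p.1 i₀ ≠ 0 ∧ p.2 j₀ ≠ 0) :
    ν.map (fun p => kron p.1 p.2) =
      (ν.map (segreCoords i₀ j₀ ∘ fun p => kron p.1 p.2)).map (segreChart j₀) := by
  rw [Measure.map_map (analyticOnNhd_segreChart j₀).continuous.measurable
    ((measurable_segreCoords i₀ j₀).comp measurable_kron)]
  exact Measure.map_congr (hν.mono fun p hp => (segreChart_segreCoords_kron i₀ j₀ hp.1 hp.2).symm)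

theorem ae_map_segreCoords_kron_mem_segreDomain (hν : ∀ᵐ p ∂ν, p.1 i₀ ≠ 0 ∧ p.2 j₀ ≠ 0) :
    ∀ᵐ v ∂ν.map (segreCoords i₀ j₀ ∘ fun p => kron p.1 p.2), v ∈ segreDomain i₀ j₀ := by
  refine (ae_map_iff ((measurable_segreCoords i₀ j₀).comp measurable_kron).aemeasurable
    (isOpen_segreDomain i₀ j₀).measurableSet).2 (hν.mono fun p hp => ?_)
  simp only [Function.comp_apply, segreCoords_apply_inl, kron_apply]
  exact mul_ne_zero hp.1 hp.2

theorem absolutelyContinuous_map_segreCoords_kron (hν : ν ≪ volume) :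
    ν.map (segreCoords i₀ j₀ ∘ fun p => kron p.1 p.2) ≪ volume := by
  rw [Measure.volume_eq_prod] at hν
  rw [← Measure.restrict_eq_self_of_ae_mem (hν.ae_le (ae_fst_ne_zero_and_snd_ne_zero i₀ j₀))]
  refine hν.map_restrict_of_section (by have := j₀.pos; simp; omega)
    ((measurable_segreCoords i₀ j₀).comp measurable_kron) (differentiableOn_segreLift j₀)
    fun p hp => ⟨p.2 j₀, hp.2, segreLift_segreCoords_kron i₀ j₀ hp.1 hp.2⟩

end SegreMeasure

theorem kronecker_is_analytic {k l : ℕ} {Ω : Type*} [MeasureSpace Ω]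
    [IsProbabilityMeasure (volume : Measure Ω)]
    (a : Ω → EuclideanSpace ℝ (Fin k)) (b : Ω → EuclideanSpace ℝ (Fin l))
    (ha : Measurable a) (hb : Measurable b)
    (hindep : ProbabilityTheory.IndepFun a b volume)
    (hac : (Measure.map a volume).prod (Measure.map b volume) ≪
      (volume : Measure (EuclideanSpace ℝ (Fin k) × EuclideanSpace ℝ (Fin l)))) :
    IsAnalyticMeasure (k + l - 1) (k * l) (Measure.map (fun ω => kron (a ω) (b ω)) volume) := by
  rcases Nat.eq_zero_or_pos (k * l) with hkl | hkl
  · exact isAnalyticMeasure_of_eq_zero hkl _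
  obtain ⟨hk, hl⟩ := CanonicallyOrderedAdd.mul_pos.1 hkl
  let i₀ : Fin k := ⟨0, hk⟩
  let j₀ : Fin l := ⟨0, hl⟩
  have hmap : volume.map (fun ω => kron (a ω) (b ω)) =
      ((volume.map a).prod (volume.map b)).map fun p => kron p.1 p.2 := by
    rw [← hindep.map_prod_eq_prod_map_map ha.aemeasurable hb.aemeasurable,
      Measure.map_map measurable_kron (ha.prodMk hb)]
    rfl
  have hsupp := hac.ae_le (ae_fst_ne_zero_and_snd_ne_zero i₀ j₀)
  rw [hmap, map_kron_eq_map_segreChart i₀ j₀ hsupp]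
  have hv₀ : WithLp.toLp 2 (fun _ => 1) ∈ segreDomain i₀ j₀ := by simp
  exact isAnalyticMeasure_map (analyticOnNhd_segreChart j₀)
    ⟨_, jacobian_ne_zero_of_injective (injective_fderiv_segreChart i₀ j₀ hv₀)⟩
    (isOpen_segreDomain i₀ j₀).measurableSet (injOn_segreChart i₀ j₀)
    (ae_map_segreCoords_kron_mem_segreDomain i₀ j₀ hsupp)
    (absolutelyContinuous_map_segreCoords_kron i₀ j₀ hac)
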